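/- The denormalized floats are exactly the floats of magnitude strictly below the smallest normalized magnitude: for any floating point bit vector B with exponent field E = UI(e), |FP(B)| < 2^{1-bias} if and only if E = 0, where bias = 2^{j-1}-1. Moreover the map from mantissa M to denormalized magnitude 2^{1-bias}·M·2^{-x} is strictly increasing, and the denormalized magnitudes together with the normalized magnitudes form a strictly increasing sequence in the unsigned-integer order of the exponent-mantissa bits. -/

import Mathlib

/-- Unsigned integer interpretation of a bit vector. -/
def UI {k : ℕ} (B : Fin k → Bool) : ℕ :=
  ∑ i : Fin k, if B i then 2 ^ (i : ℕ) else 0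

/-- Two's complement (signed integer) interpretation of a (k+1)-bit vector. -/
def SI {k : ℕ} (B : Fin (k + 1) → Bool) : ℤ :=
  if B (Fin.last k) then
    -2 ^ k + ∑ i : Fin k, (if B i.castSucc then (2 : ℤ) ^ (i : ℕ) else 0)
  else (UI B : ℤ)

/-- Sign bit of a floating point bit vector of length x + j + 1. -/
def signBit (j x : ℕ) (B : Fin (x + j + 1) → Bool) : Bool := B (Fin.last (x + j))

/-- Unsigned value of the exponent field. -/
def expo (j x : ℕ) (B : Fin (x + j + 1) → Bool) : ℕ :=
  ∑ i : Fin j, if B ⟨x + (i : ℕ), by have := i.isLt; omega⟩ then 2 ^ (i : ℕ) else 0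

/-- Unsigned value of the mantissa field. -/
def mant (j x : ℕ) (B : Fin (x + j + 1) → Bool) : ℕ :=
  ∑ i : Fin x, if B ⟨(i : ℕ), by have := i.isLt; omega⟩ then 2 ^ (i : ℕ) else 0

/-- The exponent bias 2^(j-1) - 1. -/
def bias (j : ℕ) : ℤ := 2 ^ (j - 1) - 1

/-- Floating point magnitude (normalized if exponent field nonzero, else denormalized). -/
def mag (j x : ℕ) (B : Fin (x + j + 1) → Bool) : ℚ :=
  if expo j x B = 0 then
    (2 : ℚ) ^ ((1 : ℤ) - bias j) * (mant j x B) * (2 : ℚ) ^ (-(x : ℤ))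
  else
    (2 : ℚ) ^ ((expo j x B : ℤ) - bias j) * (1 + (mant j x B) * (2 : ℚ) ^ (-(x : ℤ)))

/-- Floating point interpretation, as a signed-magnitude value: the sign is paired
(lexicographically) with the (sign-adjusted) magnitude, so that -0 < +0. -/
def FP (j x : ℕ) (B : Fin (x + j + 1) → Bool) : ℤ ×ₗ ℚ :=
  toLex (if signBit j x B then ((0 : ℤ), -(mag j x B)) else ((1 : ℤ), mag j x B))

/-- The floating point value +0. -/
def fpZero : ℤ ×ₗ ℚ := toLex ((1 : ℤ), (0 : ℚ))

/-- Mask with only the most significant bit set. -/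
def mask (k : ℕ) : Fin (k + 1) → Bool := fun i => decide (i = Fin.last k)

/-- Bitwise XOR of two bit vectors. -/
def xorVec {k : ℕ} (X Y : Fin k → Bool) : Fin k → Bool := fun i => xor (X i) (Y i)

/-- Negation of a floating point value: swap the sign, keep the magnitude. -/
def fpNeg (p : ℤ ×ₗ ℚ) : ℤ ×ₗ ℚ := toLex (1 - (ofLex p).1, -(ofLex p).2)

/-- Auxiliary integer encoding of a magnitude. -/
def gAux (x E M : ℕ) : ℕ := if E = 0 then M else 2 ^ (E - 1) * (2 ^ x + M)

lemma mant_lt (j x : ℕ) (B : Fin (x + j + 1) → Bool) : mant j x B < 2 ^ x := by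
  unfold mant
  calc (∑ i : Fin x, if B ⟨(i : ℕ), by have := i.isLt; omega⟩ then 2 ^ (i : ℕ) else 0)
      ≤ ∑ i : Fin x, 2 ^ (i : ℕ) := by
        apply Finset.sum_le_sum; intro i _; split <;> simp
    _ < 2 ^ x := by
        rw [Fin.sum_univ_eq_sum_range (fun i => 2 ^ i), Nat.geomSum_eq le_rfl]
        have : 1 ≤ 2 ^ x := Nat.one_le_two_pow
        omega

lemma mag_eq_gAux (j x : ℕ) (B : Fin (x + j + 1) → Bool) :
    mag j x B = (2 : ℚ) ^ ((1 : ℤ) - bias j) * (2 : ℚ) ^ (-(x : ℤ)) *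
      (gAux x (expo j x B) (mant j x B)) := by
  unfold mag gAux
  split_ifs with h
  · simp [h]; ring
  · have h2 : (2 : ℚ) ≠ 0 := two_ne_zero
    have hE : 1 ≤ expo j x B := Nat.one_le_iff_ne_zero.mpr h
    have he : ((expo j x B : ℤ) - bias j) = (1 - bias j) + ((expo j x B : ℤ) - 1) := by ring
    rw [he, zpow_add₀ h2]
    have h3 : (2 : ℚ) ^ ((expo j x B : ℤ) - 1) = ((2 ^ (expo j x B - 1) : ℕ) : ℚ) := by
      push_cast
      rw [← zpow_natCast (2:ℚ) (expo j x B - 1)]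
      congr 1
      omega
    rw [h3]
    have h4 : (1 + (mant j x B : ℚ) * (2 : ℚ) ^ (-(x : ℤ))) =
        (2 : ℚ) ^ (-(x : ℤ)) * ((2 ^ x + mant j x B : ℕ) : ℚ) := by
      push_cast
      rw [← zpow_natCast (2:ℚ) x]
      rw [mul_add]
      rw [← zpow_add₀ h2]
      simp
      ring
    rw [h4]
    push_cast
    ring

lemma gAux_mono (x E M E' M' : ℕ) (hM : M < 2 ^ x) (hM' : M' < 2 ^ x)
    (h : E * 2 ^ x + M < E' * 2 ^ x + M') : gAux x E M < gAux x E' M' := by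
  have hx : 0 < 2 ^ x := Nat.pow_pos two_pos
  have hEE' : E ≤ E' := by
    by_contra hc
    push_neg at hc
    have : E' * 2 ^ x + M' < E * 2 ^ x + M := by
      calc E' * 2 ^ x + M' < E' * 2 ^ x + 2 ^ x := Nat.add_lt_add_left hM' _
        _ = (E' + 1) * 2 ^ x := by ring
        _ ≤ E * 2 ^ x := Nat.mul_le_mul_right _ hc
        _ ≤ E * 2 ^ x + M := Nat.le_add_right _ _
    exact Nat.lt_irrefl _ (h.trans this)
  rcases Nat.eq_zero_or_pos E' with hE' | hE'
  · have hE0 : E = 0 := by omega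
    have hMM' : M < M' := by
      subst hE0; subst hE'; simpa using h
    unfold gAux
    rw [if_pos hE0, if_pos hE']
    exact hMM'
  rcases Nat.eq_zero_or_pos E with hE | hE
  · unfold gAux
    rw [if_pos hE, if_neg (by omega)]
    calc M < 2 ^ x := hM
      _ ≤ 2 ^ x + M' := Nat.le_add_right _ _
      _ ≤ 2 ^ (E' - 1) * (2 ^ x + M') := Nat.le_mul_of_pos_left _ (Nat.pow_pos two_pos)
  unfold gAux
  rw [if_neg (by omega), if_neg (by omega)]
  rcases Nat.lt_or_ge E E' with hlt | hge
  · obtain ⟨E0, rfl⟩ : ∃ E0, E = E0 + 1 := ⟨E - 1, by omega⟩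
    calc 2 ^ (E0 + 1 - 1) * (2 ^ x + M) < 2 ^ (E0 + 1 - 1) * (2 ^ x + 2 ^ x) :=
          mul_lt_mul_of_pos_left (by omega) (Nat.pow_pos two_pos)
      _ = 2 ^ (E0 + 1) * 2 ^ x := by rw [Nat.add_sub_cancel]; ring
      _ ≤ 2 ^ (E' - 1) * 2 ^ x :=
          Nat.mul_le_mul_right _ (Nat.pow_le_pow_right (by norm_num) (by omega))
      _ ≤ 2 ^ (E' - 1) * (2 ^ x + M') := Nat.mul_le_mul_left _ (Nat.le_add_right _ _)
  · have hEq : E = E' := le_antisymm hEE' hge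
    subst hEq
    have hMM' : M < M' := by
      have := Nat.lt_of_add_lt_add_left h
      omega
    exact mul_lt_mul_of_pos_left (by omega) (Nat.pow_pos two_pos)

/-- the denormalized floats are exactly those of magnitude below
the smallest normalized magnitude; the denormalized magnitude is strictly
increasing in the mantissa; and all magnitudes are strictly increasing in the
unsigned-integer order of the exponent-mantissa bits. -/
theorem denormalized_characterization (j x : ℕ) (hj : 1 ≤ j) :
    (∀ B : Fin (x + j + 1) → Bool,
      mag j x B < (2 : ℚ) ^ ((1 : ℤ) - bias j) ↔ expo j x B = 0) ∧
    (∀ M M' : ℕ, M < M' → M' < 2 ^ x →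
      (2 : ℚ) ^ ((1 : ℤ) - bias j) * M * (2 : ℚ) ^ (-(x : ℤ)) <
        (2 : ℚ) ^ ((1 : ℤ) - bias j) * M' * (2 : ℚ) ^ (-(x : ℤ))) ∧
    (∀ B B' : Fin (x + j + 1) → Bool,
      expo j x B * 2 ^ x + mant j x B < expo j x B' * 2 ^ x + mant j x B' →
      mag j x B < mag j x B') := by
  have hC : (0 : ℚ) < (2 : ℚ) ^ ((1 : ℤ) - bias j) * (2 : ℚ) ^ (-(x : ℤ)) := by positivity
  refine ⟨?_, ?_, ?_⟩
  · intro B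
    have hM := mant_lt j x B
    rw [mag_eq_gAux]
    have key : (2 : ℚ) ^ ((1 : ℤ) - bias j) =
        (2 : ℚ) ^ ((1 : ℤ) - bias j) * (2 : ℚ) ^ (-(x : ℤ)) * ((2 ^ x : ℕ) : ℚ) := by
      push_cast
      rw [← zpow_natCast (2:ℚ) x, mul_assoc, ← zpow_add₀ (two_ne_zero)]
      simp
    nth_rewrite 2 [key]
    rw [mul_lt_mul_iff_right₀ hC, Nat.cast_lt]
    constructor
    · intro h
      by_contra hne
      unfold gAux at h
      rw [if_neg hne] at h
      have : 2 ^ x ≤ 2 ^ (expo j x B - 1) * (2 ^ x + mant j x B) := by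
        calc 2 ^ x ≤ 2 ^ x + mant j x B := Nat.le_add_right _ _
          _ ≤ _ := Nat.le_mul_of_pos_left _ (Nat.pow_pos two_pos)
      omega
    · intro h
      unfold gAux
      rw [if_pos h]
      exact hM
  · intro M M' hMM' _
    have h2 : (0 : ℚ) < (2 : ℚ) ^ ((1 : ℤ) - bias j) := by positivity
    have h3 : (0 : ℚ) < (2 : ℚ) ^ (-(x : ℤ)) := by positivity
    have : (M : ℚ) < (M' : ℚ) := by exact_mod_cast hMM'
    exact mul_lt_mul_of_pos_right (mul_lt_mul_of_pos_left this h2) h3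
  · intro B B' h
    rw [mag_eq_gAux, mag_eq_gAux]
    apply mul_lt_mul_of_pos_left _ hC
    exact_mod_cast gAux_mono x _ _ _ _ (mant_lt j x B) (mant_lt j x B') h
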